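/- arXiv:1710.02393 — 6 statements merged into one kernel-verified Lean document; each statement's English description precedes it below -/
import Mathlib

section
/- Let B be a complete atomic Boolean algebra. The set of completely join-irreducible elements of B^[2] is join-dense in B^[2]: every element of B^[2] is the supremum of the completely join-irreducible elements below it. -/
/-- Atoms are completely join-irreducible in a frame. -/
lemma atom_mem_of_eq_sSup {B : Type*} [CompleteAtomicBooleanAlgebra B] {a : B}
    (ha : IsAtom a) {T : Set B} (h : a = sSup T) : a ∈ T := by
  have h1 : a = ⨆ t ∈ T, a ⊓ t := by
    rw [← inf_sSup_eq, ← h, inf_idem]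
  obtain ⟨t, htT, hne⟩ : ∃ t ∈ T, a ⊓ t ≠ ⊥ := by
    by_contra hc
    push_neg at hc
    apply ha.1
    rw [h1]
    exact le_bot_iff.mp (iSup₂_le fun t ht => (hc t ht).le)
  have h2 : a ⊓ t = a := by
    rcases (ha.le_iff.mp inf_le_left) with h | h
    · exact absurd h hne
    · exact h
  have hta : t ≤ a := h ▸ le_sSup htT
  have : t = a := le_antisymm hta (h2 ▸ inf_le_right)
  exact this ▸ htT

/-- Let `B` be a complete atomic Boolean algebra. The completely join-irreducible elements
of `B^[2] = {(a,b) : a ≤ b}` are join-dense: every element of `B^[2]` is the supremum of the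
completely join-irreducible elements of `B^[2]` below it. -/
theorem cji_join_dense_pair (B : Type*) [CompleteAtomicBooleanAlgebra B]
    (x : B × B) (hx : x.1 ≤ x.2) :
    x = sSup {p : B × B | p.1 ≤ p.2 ∧
      (∀ S : Set (B × B), (∀ q ∈ S, q.1 ≤ q.2) → p = sSup S → p ∈ S) ∧ p ≤ x} := by
  set P : Set (B × B) := {p : B × B | p.1 ≤ p.2 ∧
      (∀ S : Set (B × B), (∀ q ∈ S, q.1 ≤ q.2) → p = sSup S → p ∈ S) ∧ p ≤ x} with hP
  -- the two families of CJI elements below x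
  have mem1 : ∀ a : B, IsAtom a → a ≤ x.1 → (a, a) ∈ P := by
    intro a ha hax
    refine ⟨le_rfl, ?_, ⟨hax, hax.trans hx⟩⟩
    intro S hS heq
    have hfst : a = sSup (Prod.fst '' S) := by
      have := congrArg Prod.fst heq
      simpa [Prod.fst_sSup, Prod.snd_sSup] using this
    obtain ⟨q, hqS, hq1⟩ := atom_mem_of_eq_sSup ha hfst
    have hq2le : q.2 ≤ a := by
      have : q.2 ≤ (sSup S).2 := by
        have : q ≤ sSup S := le_sSup hqS
        exact this.2
      rwa [← heq] at this
    have hq2 : q.2 = a := le_antisymm hq2le (hq1 ▸ hS q hqS)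
    have : q = (a, a) := Prod.ext hq1 hq2
    exact this ▸ hqS
  have mem2 : ∀ a : B, IsAtom a → a ≤ x.2 → ((⊥ : B), a) ∈ P := by
    intro a ha hax
    refine ⟨bot_le, ?_, ⟨bot_le, hax⟩⟩
    intro S hS heq
    have hsnd : a = sSup (Prod.snd '' S) := by
      have := congrArg Prod.snd heq
      simpa [Prod.fst_sSup, Prod.snd_sSup] using this
    obtain ⟨q, hqS, hq2⟩ := atom_mem_of_eq_sSup ha hsnd
    have hq1 : q.1 = ⊥ := by
      have h1 : q.1 ≤ (sSup S).1 := (le_sSup hqS).1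
      rw [← heq] at h1
      exact le_bot_iff.mp h1
    have : q = ((⊥ : B), a) := Prod.ext hq1 hq2
    exact this ▸ hqS
  refine le_antisymm ?_ (sSup_le fun p hp => hp.2.2)
  rw [Prod.le_def]
  constructor
  · -- x.1 ≤ (sSup P).1
    conv_lhs => rw [← sSup_atoms_le_eq x.1]
    apply sSup_le
    rintro a ⟨ha, hax⟩
    have : (a, a) ≤ sSup P := le_sSup (mem1 a ha hax)
    exact this.1
  · conv_lhs => rw [← sSup_atoms_le_eq x.2]
    apply sSup_le
    rintro a ⟨ha, hax⟩
    have : ((⊥ : B), a) ≤ sSup P := le_sSup (mem2 a ha hax)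
    exact this.2
end

section
/- Every Stone algebra S embeds into the Stone algebra (P(U))^[2] = {(A,B) : A ⊆ B ⊆ U} for some set U, where operations are componentwise union and intersection and ∼(A,B) = (Bᶜ, Bᶜ). -/
section aux
variable {S : Type u} [DistribLattice S] [BoundedOrder S]
variable (n : S → S) (hpc : ∀ a : S, IsGreatest {c : S | a ⊓ c = ⊥} (n a))

include hpc

lemma aux_le_n_iff {a c : S} : c ≤ n a ↔ a ⊓ c = ⊥ := by
  constructor
  · intro h
    have := (hpc a).1
    exact le_antisymm (by calc a ⊓ c ≤ a ⊓ n a := inf_le_inf_left _ h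
                         _ = ⊥ := this) bot_le
  · intro h; exact (hpc a).2 h

lemma aux_inf_n (a : S) : a ⊓ n a = ⊥ := (hpc a).1

lemma aux_n_bot : n (⊥ : S) = ⊤ :=
  le_antisymm le_top ((aux_le_n_iff n hpc).2 (by simp))

lemma aux_n_top : n (⊤ : S) = ⊥ := by
  have := aux_inf_n n hpc (⊤ : S); simpa using this

lemma aux_n_sup (a b : S) : n (a ⊔ b) = n a ⊓ n b := by
  apply le_antisymm
  · exact le_inf ((aux_le_n_iff n hpc).2 (le_antisymm (le_trans (inf_le_inf_right _ le_sup_left)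
        ((aux_le_n_iff n hpc).1 le_rfl).le) bot_le))
      ((aux_le_n_iff n hpc).2 (le_antisymm (le_trans (inf_le_inf_right _ le_sup_right)
        ((aux_le_n_iff n hpc).1 le_rfl).le) bot_le))
  · refine (aux_le_n_iff n hpc).2 ?_
    rw [inf_sup_right,
        show a ⊓ (n a ⊓ n b) = (a ⊓ n a) ⊓ n b by ac_rfl,
        show b ⊓ (n a ⊓ n b) = n a ⊓ (b ⊓ n b) by ac_rfl,
        aux_inf_n n hpc, aux_inf_n n hpc]
    simp

lemma aux_n_inf (hstone : ∀ a : S, n a ⊔ n (n a) = ⊤) (a b : S) :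
    n (a ⊓ b) = n a ⊔ n b := by
  apply le_antisymm
  · have h1 : n (a ⊓ b) ⊓ n a ≤ n a := inf_le_right
    have h2 : n (a ⊓ b) ⊓ n (n a) ≤ n b := by
      refine (aux_le_n_iff n hpc).2 ?_
      have key : a ⊓ (n (a ⊓ b) ⊓ n (n a) ⊓ b) = ⊥ := by
        rw [show a ⊓ (n (a ⊓ b) ⊓ n (n a) ⊓ b) = (a ⊓ b) ⊓ n (a ⊓ b) ⊓ n (n a) by ac_rfl,
            aux_inf_n n hpc]; simp
      have hle : n (a ⊓ b) ⊓ n (n a) ⊓ b ≤ n a :=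
        (aux_le_n_iff n hpc).2 key
      have : n (a ⊓ b) ⊓ n (n a) ⊓ b ≤ n a ⊓ n (n a) :=
        le_inf hle (le_trans inf_le_left inf_le_right)
      rw [aux_inf_n n hpc] at this
      rw [inf_comm b]
      exact le_antisymm this bot_le
    calc n (a ⊓ b) = n (a ⊓ b) ⊓ (n a ⊔ n (n a)) := by rw [hstone a]; simp
      _ = (n (a ⊓ b) ⊓ n a) ⊔ (n (a ⊓ b) ⊓ n (n a)) := inf_sup_left _ _ _
      _ ≤ n a ⊔ n b := sup_le_sup h1 h2
  · refine sup_le ((aux_le_n_iff n hpc).2 ?_) ((aux_le_n_iff n hpc).2 ?_)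
    · rw [show a ⊓ b ⊓ n a = (a ⊓ n a) ⊓ b by ac_rfl, aux_inf_n n hpc]; simp
    · rw [inf_assoc, aux_inf_n n hpc]; simp

set_option linter.unusedSectionVars false in
/-- separation: if ¬ a ≤ b then there's a prime ideal containing b but not a. -/
lemma aux_sep {a b : S} (h : ¬ a ≤ b) :
    ∃ I : Order.Ideal S, I.IsPrime ∧ b ∈ I ∧ a ∉ I := by
  have hd : Disjoint ((Order.PFilter.principal a : Order.PFilter S) : Set S)
      ((Order.Ideal.principal b : Order.Ideal S) : Set S) := by
    rw [Set.disjoint_left]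
    intro x hx hx'
    exact h (le_trans hx hx')
  obtain ⟨J, hJ, hIJ, hdisj⟩ := DistribLattice.prime_ideal_of_disjoint_filter_ideal hd
  refine ⟨J, hJ, hIJ (Order.Ideal.mem_principal.2 le_rfl), ?_⟩
  intro haJ
  exact Set.disjoint_left.1 hdisj (Order.PFilter.mem_principal.2 le_rfl) haJ

end aux

/-- Every Stone algebra `S` (bounded distributive lattice with pseudocomplement `n` satisfying
the Stone identity) embeds into the Stone algebra `(P(U))^[2] = {(A,B) : A ⊆ B ⊆ U}` for some
set `U`, with componentwise operations and `∼(A,B) = (Bᶜ,Bᶜ)`: there is an injective map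
preserving `⊔, ⊓, ∼, ⊥, ⊤` whose values are pairs `(A,B)` with `A ⊆ B`. -/
theorem stone_embeds_pair_powerset (S : Type u) [DistribLattice S] [BoundedOrder S]
    (n : S → S) (hpc : ∀ a : S, IsGreatest {c : S | a ⊓ c = ⊥} (n a))
    (hstone : ∀ a : S, n a ⊔ n (n a) = ⊤) :
    ∃ (U : Type u) (f : S → Set U × Set U),
      Function.Injective f ∧
      (∀ a : S, (f a).1 ⊆ (f a).2) ∧
      f ⊥ = (∅, ∅) ∧ f ⊤ = (Set.univ, Set.univ) ∧
      (∀ a b : S, f (a ⊔ b) = f a ⊔ f b) ∧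
      (∀ a b : S, f (a ⊓ b) = f a ⊓ f b) ∧
      (∀ a : S, f (n a) = ((f a).2ᶜ, (f a).2ᶜ)) := by
  refine ⟨{I : Order.Ideal S // I.IsPrime},
    fun a => ({I | a ∉ I.1}, {I | n a ∈ I.1}), ?_, ?_, ?_, ?_, ?_, ?_, ?_⟩
  · -- injective
    intro a b hab
    have h1 : {I : {I : Order.Ideal S // I.IsPrime} | a ∉ I.1} = {I | b ∉ I.1} :=
      congrArg Prod.fst hab
    by_contra hne
    rcases (not_and_or.1 (fun h : a ≤ b ∧ b ≤ a => hne (le_antisymm h.1 h.2))) with h | h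
    · obtain ⟨I, hI, hbI, haI⟩ := aux_sep n hpc h
      have : (⟨I, hI⟩ : {I : Order.Ideal S // I.IsPrime}) ∈ {I | a ∉ I.1} := haI
      rw [h1] at this
      exact this hbI
    · obtain ⟨I, hI, haI, hbI⟩ := aux_sep n hpc h
      have : (⟨I, hI⟩ : {I : Order.Ideal S // I.IsPrime}) ∈ {I | b ∉ I.1} := hbI
      rw [← h1] at this
      exact this haI
  · -- A ⊆ B
    intro a I hI
    have hbot : a ⊓ n a ∈ I.1 := by rw [aux_inf_n n hpc]; exact I.1.bot_mem
    rcases I.2.mem_or_mem hbot with h | h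
    · exact absurd h hI
    · exact h
  · -- bot
    simp only [Prod.ext_iff]
    constructor
    · ext I; simp [I.1.bot_mem]
    · ext I; simp [aux_n_bot n hpc, I.2.toIsProper.top_notMem]
  · -- top
    simp only [Prod.ext_iff]
    constructor
    · ext I; simp [I.2.toIsProper.top_notMem]
    · ext I; simp [aux_n_top n hpc, I.1.bot_mem]
  · -- sup
    intro a b
    refine Prod.ext ?_ ?_
    · ext I
      simp only [Set.mem_setOf_eq, Prod.fst_sup, Set.sup_eq_union, Set.mem_union]
      constructor
      · intro h; by_contra hc
        push_neg at hc
        exact h (Order.Ideal.sup_mem hc.1 hc.2)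
      · rintro (h | h) hs
        · exact h (I.1.lower le_sup_left hs)
        · exact h (I.1.lower le_sup_right hs)
    · ext I
      simp only [Set.mem_setOf_eq, Prod.snd_sup, Set.sup_eq_union, Set.mem_union,
        aux_n_sup n hpc]
      constructor
      · intro h; exact I.2.mem_or_mem h
      · rintro (h | h)
        · exact I.1.lower inf_le_left h
        · exact I.1.lower inf_le_right h
  · -- inf
    intro a b
    refine Prod.ext ?_ ?_
    · ext I
      simp only [Set.mem_setOf_eq, Prod.fst_inf, Set.inf_eq_inter, Set.mem_inter_iff]
      constructor
      · intro h
        exact ⟨fun ha => h (I.1.lower inf_le_left ha),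
               fun hb => h (I.1.lower inf_le_right hb)⟩
      · rintro ⟨ha, hb⟩ hs
        rcases I.2.mem_or_mem hs with h | h
        · exact ha h
        · exact hb h
    · ext I
      simp only [Set.mem_setOf_eq, Prod.snd_inf, Set.inf_eq_inter, Set.mem_inter_iff,
        aux_n_inf n hpc hstone]
      constructor
      · intro h
        exact ⟨I.1.lower le_sup_left h, I.1.lower le_sup_right h⟩
      · rintro ⟨ha, hb⟩
        exact Order.Ideal.sup_mem ha hb
  · -- negation
    intro a
    refine Prod.ext ?_ ?_
    · rfl
    · ext I
      simp only [Set.mem_setOf_eq, Set.mem_compl_iff]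
      constructor
      · intro h hna
        have : n a ⊓ n (n a) ∈ I.1 := I.1.lower inf_le_right h
        have htop : (⊤ : S) ∈ I.1 := by
          rw [← hstone a]; exact Order.Ideal.sup_mem hna h
        exact I.2.toIsProper.top_notMem htop
      · intro h
        have hbot : n a ⊓ n (n a) ∈ I.1 := by
          rw [aux_inf_n n hpc]; exact I.1.bot_mem
        rcases I.2.mem_or_mem hbot with h' | h'
        · exact absurd h' h
        · exact h'
end

section
/- Every dual Stone algebra DS embeds into the dual Stone algebra (P(U))^[2] = {(A,B) : A ⊆ B ⊆ U} for some set U, where operations are componentwise and ¬(A,B) = (Aᶜ, Aᶜ). -/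
/-- Every dual Stone algebra `DS` (bounded distributive lattice with dual pseudocomplement `n`
satisfying `¬a ⊓ ¬¬a = ⊥`) embeds into the dual Stone algebra
`(P(U))^[2] = {(A,B) : A ⊆ B ⊆ U}` for some set `U`, with componentwise operations and
`¬(A,B) = (Aᶜ,Aᶜ)`: there is an injective map preserving `⊔, ⊓, ¬, ⊥, ⊤` whose values are
pairs `(A,B)` with `A ⊆ B`. -/
theorem dual_stone_embeds_pair_powerset (DS : Type u) [DistribLattice DS] [BoundedOrder DS]
    (n : DS → DS) (hdpc : ∀ a : DS, IsLeast {c : DS | a ⊔ c = ⊤} (n a))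
    (hdstone : ∀ a : DS, n a ⊓ n (n a) = ⊥) :
    ∃ (U : Type u) (f : DS → Set U × Set U),
      Function.Injective f ∧
      (∀ a : DS, (f a).1 ⊆ (f a).2) ∧
      f ⊥ = (∅, ∅) ∧ f ⊤ = (Set.univ, Set.univ) ∧
      (∀ a b : DS, f (a ⊔ b) = f a ⊔ f b) ∧
      (∀ a b : DS, f (a ⊓ b) = f a ⊓ f b) ∧
      (∀ a : DS, f (n a) = ((f a).1ᶜ, (f a).1ᶜ)) := by
  -- basic facts about the dual pseudocomplement
  have hsup : ∀ a : DS, a ⊔ n a = ⊤ := fun a => (hdpc a).1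
  have hleast : ∀ a c : DS, a ⊔ c = ⊤ → n a ≤ c := fun a c hc => (hdpc a).2 hc
  have hanti : ∀ a b : DS, a ≤ b → n b ≤ n a := by
    intro a b hab
    exact hleast b (n a) (top_le_iff.1 (by
      calc (⊤ : DS) = a ⊔ n a := (hsup a).symm
      _ ≤ b ⊔ n a := sup_le_sup_right hab _))
  have hnbot : n (⊥ : DS) = ⊤ := by
    have := hsup (⊥ : DS); simpa using this
  have hntop : n (⊤ : DS) = ⊥ := le_bot_iff.1 (hleast ⊤ ⊥ (by simp))
  have hninf : ∀ a b : DS, n (a ⊓ b) = n a ⊔ n b := by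
    intro a b
    apply le_antisymm
    · apply hleast
      rw [sup_inf_right]
      have h1 : a ⊔ (n a ⊔ n b) = ⊤ := by rw [← sup_assoc, hsup a]; simp
      have h2 : b ⊔ (n a ⊔ n b) = ⊤ := by
        rw [sup_comm (n a) (n b), ← sup_assoc, hsup b]; simp
      rw [h1, h2]; simp
    · exact sup_le (hanti _ _ inf_le_left) (hanti _ _ inf_le_right)
  -- the Stone-type law: `n a ⊓ n b ≤ n (a ⊔ b)` (needs the dual Stone identity)
  have hnn : ∀ a : DS, n a ⊔ n (n a) = ⊤ := fun a => hsup (n a)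
  have hkey : ∀ a b : DS, n a ⊓ n b ≤ n (a ⊔ b) := by
    intro a b
    have hb : n b ≤ n (a ⊔ b) ⊔ n (n a) := by
      apply hleast
      have h1 : n a ≤ b ⊔ n (a ⊔ b) := by
        apply hleast
        rw [← sup_assoc]
        exact hsup (a ⊔ b)
      have : n a ⊔ n (n a) ≤ b ⊔ (n (a ⊔ b) ⊔ n (n a)) := by
        rw [← sup_assoc]
        exact sup_le_sup_right h1 _
      rw [hnn a] at this
      exact top_le_iff.1 this
    calc n a ⊓ n b ≤ n a ⊓ (n (a ⊔ b) ⊔ n (n a)) := inf_le_inf_left _ hb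
      _ = (n a ⊓ n (a ⊔ b)) ⊔ (n a ⊓ n (n a)) := inf_sup_left _ _ _
      _ = n a ⊓ n (a ⊔ b) := by rw [hdstone a]; simp
      _ ≤ n (a ⊔ b) := inf_le_right
  -- the space of prime ideals
  refine ⟨{J : Order.Ideal DS // J.IsPrime},
    fun a => ({J | n a ∈ J.1}, {J | a ∉ J.1}), ?_, ?_, ?_, ?_, ?_, ?_, ?_⟩
  · -- injectivity, via the prime ideal separation theorem
    have sep : ∀ a b : DS, ¬ a ≤ b → ∃ J : Order.Ideal DS, J.IsPrime ∧ b ∈ J ∧ a ∉ J := by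
      intro a b hab
      have hdisj : Disjoint ((Order.PFilter.principal a : Order.PFilter DS) : Set DS)
          ((Order.Ideal.principal b : Order.Ideal DS) : Set DS) := by
        rw [Set.disjoint_left]
        intro x hx hx'
        exact hab (le_trans (Order.PFilter.mem_principal.1 hx)
          (Order.Ideal.mem_principal.1 hx'))
      obtain ⟨J, hJp, hJb, hJd⟩ := DistribLattice.prime_ideal_of_disjoint_filter_ideal hdisj
      refine ⟨J, hJp, hJb Order.Ideal.mem_principal_self, ?_⟩
      exact Set.disjoint_left.1 hJd (Order.PFilter.mem_principal.2 le_rfl)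
    intro a b hfab
    have h2 : {J : {J : Order.Ideal DS // J.IsPrime} | a ∉ J.1}
        = {J : {J : Order.Ideal DS // J.IsPrime} | b ∉ J.1} := congrArg Prod.snd hfab
    by_contra hne
    rcases (not_and_or.1 fun h : a ≤ b ∧ b ≤ a => hne (le_antisymm h.1 h.2)) with h | h
    · obtain ⟨J, hJp, hJb, hJa⟩ := sep a b h
      have : (⟨J, hJp⟩ : {J : Order.Ideal DS // J.IsPrime}) ∈
          {J : {J : Order.Ideal DS // J.IsPrime} | b ∉ J.1} := h2 ▸ hJa
      exact this hJb
    · obtain ⟨J, hJp, hJa, hJb⟩ := sep b a h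
      have : (⟨J, hJp⟩ : {J : Order.Ideal DS // J.IsPrime}) ∈
          {J : {J : Order.Ideal DS // J.IsPrime} | a ∉ J.1} := h2.symm ▸ hJb
      exact this hJa
  · -- first component contained in the second
    intro a J hJ
    simp only [Set.mem_setOf_eq] at hJ ⊢
    intro ha
    have : (⊤ : DS) ∈ J.1 := by rw [← hsup a]; exact Order.Ideal.sup_mem ha hJ
    exact J.2.1.top_notMem ‹_›
  · -- bottom
    have : ∀ J : {J : Order.Ideal DS // J.IsPrime}, (⊥ : DS) ∈ J.1 :=
      fun J => J.1.bot_mem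
    refine Prod.ext ?_ ?_ <;> simp only []
    · rw [Set.eq_empty_iff_forall_notMem]
      intro J hJ
      simp only [Set.mem_setOf_eq, hnbot] at hJ
      exact J.2.1.top_notMem ‹_›
    · rw [Set.eq_empty_iff_forall_notMem]
      intro J hJ
      exact hJ (this J)
  · -- top
    refine Prod.ext ?_ ?_ <;> simp only []
    · rw [Set.eq_univ_iff_forall]
      intro J
      simp only [Set.mem_setOf_eq, hntop]
      exact J.1.bot_mem
    · rw [Set.eq_univ_iff_forall]
      intro J
      simp only [Set.mem_setOf_eq]
      intro h
      exact J.2.1.top_notMem ‹_›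
  · -- sup
    intro a b
    refine Prod.ext ?_ ?_ <;> simp only [Prod.fst_sup, Prod.snd_sup]
    · ext J
      simp only [Set.sup_eq_union, Set.mem_setOf_eq, Set.mem_union]
      constructor
      · intro h
        rcases J.2.mem_or_mem (J.1.lower (hkey a b) h) with h' | h'
        · exact Or.inl h'
        · exact Or.inr h'
      · rintro (h | h)
        · exact J.1.lower (hanti a (a ⊔ b) le_sup_left) h
        · exact J.1.lower (hanti b (a ⊔ b) le_sup_right) h
    · ext J
      simp only [Set.sup_eq_union, Set.mem_setOf_eq, Set.mem_union]
      rw [Order.Ideal.sup_mem_iff]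
      tauto
  · -- inf
    intro a b
    refine Prod.ext ?_ ?_ <;> simp only [Prod.fst_inf, Prod.snd_inf]
    · ext J
      simp only [Set.inf_eq_inter, Set.mem_setOf_eq, Set.mem_inter_iff, hninf]
      rw [Order.Ideal.sup_mem_iff]
    · ext J
      simp only [Set.inf_eq_inter, Set.mem_setOf_eq, Set.mem_inter_iff]
      constructor
      · intro h
        constructor <;> intro h' <;> [exact h (J.1.lower inf_le_left h');
          exact h (J.1.lower inf_le_right h')]
      · rintro ⟨h1, h2⟩ h
        rcases J.2.mem_or_mem h with h' | h'
        · exact h1 h'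
        · exact h2 h'
  · -- negation
    intro a
    have key : ∀ J : {J : Order.Ideal DS // J.IsPrime}, n (n a) ∈ J.1 ↔ n a ∉ J.1 := by
      intro J
      constructor
      · intro h h'
        have : (⊤ : DS) ∈ J.1 := by rw [← hnn a]; exact Order.Ideal.sup_mem h' h
        exact J.2.1.top_notMem ‹_›
      · intro h
        have : n a ⊓ n (n a) ∈ J.1 := by rw [hdstone a]; exact J.1.bot_mem
        rcases J.2.mem_or_mem this with h' | h'
        · exact absurd h' h
        · exact h'
    refine Prod.ext ?_ ?_ <;> simp only []
    · ext J
      simp only [Set.mem_setOf_eq, Set.mem_compl_iff]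
      exact key J
    · ext J
      simp only [Set.mem_setOf_eq, Set.mem_compl_iff]
end

section
/- Let 3_∼ be the three-element Stone algebra (chain 0 < a < 1 with ∼0 = 1, ∼a = ∼1 = 0). If a valuation v on formulas (built from variables using ∧, ∨, ∼, ⊥, ⊤) takes values in 3_∼, then the map v*(γ) := ∼∼v(γ) is also a valuation (i.e., commutes with ∧, ∨, ∼ and sends ⊥ to 0A and ⊤ to 1). Consequently, if for all valuations v, v(α) = 1 implies v(β) = 1, then for all valuations v, v(β) = 0 implies v(α) = 0. -/
/-- Propositional formulas built from variables using `∧`, `∨`, `∼`, `⊥`, `⊤`. -/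
inductive Fml where
  | var : ℕ → Fml
  | and : Fml → Fml → Fml
  | or : Fml → Fml → Fml
  | snot : Fml → Fml
  | bot : Fml
  | top : Fml

/-- The Stone pseudocomplement on the three-element chain `Fin 3` (`0 < 1 < 2`):
`∼0 = 2`, `∼1 = ∼2 = 0`. -/
def sneg3 (x : Fin 3) : Fin 3 := if x = 0 then 2 else 0

/-- A valuation in the three-element Stone algebra `3_∼ = Fin 3`. -/
def IsVal3S (v : Fml → Fin 3) : Prop :=
  (∀ α β : Fml, v (.and α β) = v α ⊓ v β) ∧
  (∀ α β : Fml, v (.or α β) = v α ⊔ v β) ∧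
  (∀ α : Fml, v (.snot α) = sneg3 (v α)) ∧
  v .bot = 0 ∧ v .top = 2

/-- If `v` is a valuation in the three-element Stone algebra then so is `γ ↦ ∼∼v(γ)`;
consequently truth preservation implies falsity preservation. -/
theorem stone_truth_implies_falsity_preservation :
    (∀ v : Fml → Fin 3, IsVal3S v → IsVal3S (fun γ => sneg3 (sneg3 (v γ)))) ∧
    ∀ α β : Fml, (∀ v : Fml → Fin 3, IsVal3S v → v α = 2 → v β = 2) →
      ∀ v : Fml → Fin 3, IsVal3S v → v β = 0 → v α = 0 := by
  have hnn : ∀ x y : Fin 3, sneg3 (sneg3 (x ⊓ y)) = sneg3 (sneg3 x) ⊓ sneg3 (sneg3 y) := by decide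
  have hnn' : ∀ x y : Fin 3, sneg3 (sneg3 (x ⊔ y)) = sneg3 (sneg3 x) ⊔ sneg3 (sneg3 y) := by decide
  have hnnn : ∀ x : Fin 3, sneg3 (sneg3 (sneg3 x)) = sneg3 x := by decide
  have hmain : ∀ v : Fml → Fin 3, IsVal3S v → IsVal3S (fun γ => sneg3 (sneg3 (v γ))) := by
    intro v ⟨h1, h2, h3, h4, h5⟩
    refine ⟨fun α β => ?_, fun α β => ?_, fun α => ?_, ?_, ?_⟩
    · simp only [h1]; exact hnn _ _
    · simp only [h2]; exact hnn' _ _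
    · simp only [h3, hnnn]
    · simp [h4, sneg3]
    · simp [h5, sneg3]
  refine ⟨hmain, fun α β h v hv hβ => ?_⟩
  by_contra hα
  have hv' := hmain v hv
  have key : ∀ x : Fin 3, x ≠ 0 → sneg3 (sneg3 x) = 2 := by decide
  have h2 : sneg3 (sneg3 (v α)) = 2 := key _ hα
  have := h _ hv' h2
  rw [hβ] at this
  exact absurd this (by decide)
end

section
/- Let B be a Boolean algebra and B^[3] = {(a,b,c) ∈ B³ : a ≤ b ≤ c} with componentwise lattice operations, bottom (0,0,0), top (1,1,1), ∼(a,b,c) := (cᶜ,cᶜ,cᶜ), and ¬(a,b,c) := (aᶜ,aᶜ,aᶜ). Then B^[3] is a double Stone algebra: ∼ is a pseudocomplement satisfying ∼x ⊔ ∼∼x = 1, and ¬ is a dual pseudocomplement satisfying ¬x ⊓ ¬¬x = 0. -/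
lemma aux_compl_le {B : Type*} [BooleanAlgebra B] {x y : B} (h : x ⊓ y = ⊥) : y ≤ xᶜ :=
  le_compl_iff_disjoint_left.mpr (disjoint_iff.mpr h)

lemma aux_le_compl {B : Type*} [BooleanAlgebra B] {x y : B} (h : x ⊔ y = ⊤) : xᶜ ≤ y := by
  calc xᶜ = xᶜ ⊓ (x ⊔ y) := by rw [h, inf_top_eq]
    _ = xᶜ ⊓ y := by rw [inf_sup_left]; simp
    _ ≤ y := inf_le_right

/-- `B^[3]` (monotone triples of a Boolean algebra with componentwise operations) is a double
Stone algebra: `∼(a,b,c) = (cᶜ,cᶜ,cᶜ)` is a pseudocomplement satisfying the Stone identity,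
and `¬(a,b,c) = (aᶜ,aᶜ,aᶜ)` is a dual pseudocomplement satisfying the dual Stone identity. -/
theorem triple_double_stone (B : Type*) [BooleanAlgebra B] (a b c : B)
    (h1 : a ≤ b) (h2 : b ≤ c) :
    IsGreatest {p : B × B × B | p.1 ≤ p.2.1 ∧ p.2.1 ≤ p.2.2 ∧
        ((a, b, c) : B × B × B) ⊓ p = ⊥} (cᶜ, cᶜ, cᶜ) ∧
    ((cᶜ, cᶜ, cᶜ) : B × B × B) ⊔ (cᶜᶜ, cᶜᶜ, cᶜᶜ) = ⊤ ∧
    IsLeast {p : B × B × B | p.1 ≤ p.2.1 ∧ p.2.1 ≤ p.2.2 ∧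
        ((a, b, c) : B × B × B) ⊔ p = ⊤} (aᶜ, aᶜ, aᶜ) ∧
    ((aᶜ, aᶜ, aᶜ) : B × B × B) ⊓ (aᶜᶜ, aᶜᶜ, aᶜᶜ) = ⊥ := by
  have hac : a ≤ c := le_trans h1 h2
  refine ⟨⟨⟨le_refl _, le_refl _, ?_⟩, ?_⟩, ?_, ⟨⟨le_refl _, le_refl _, ?_⟩, ?_⟩, ?_⟩
  · have e1 : a ⊓ cᶜ = ⊥ := by
      rw [← le_bot_iff, ← inf_compl_eq_bot (a := c)]
      exact inf_le_inf_right _ hac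
    have e2 : b ⊓ cᶜ = ⊥ := by
      rw [← le_bot_iff, ← inf_compl_eq_bot (a := c)]
      exact inf_le_inf_right _ h2
    have e3 : c ⊓ cᶜ = ⊥ := inf_compl_eq_bot
    simp [Prod.ext_iff, e1, e2, e3]
  · rintro ⟨p1, p2, p3⟩ ⟨hp1, hp2, hinf⟩
    simp only [Prod.mk_inf_mk, Prod.ext_iff] at hinf
    have h3 : p3 ≤ cᶜ := aux_compl_le hinf.2.2
    exact ⟨le_trans (le_trans hp1 hp2) h3, le_trans hp2 h3, h3⟩
  · simp [Prod.ext_iff]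
  · have e1 : a ⊔ aᶜ = ⊤ := sup_compl_eq_top
    have e2 : b ⊔ aᶜ = ⊤ := by
      rw [← top_le_iff, ← sup_compl_eq_top (x := a)]
      exact sup_le_sup_right h1 _
    have e3 : c ⊔ aᶜ = ⊤ := by
      rw [← top_le_iff, ← sup_compl_eq_top (x := a)]
      exact sup_le_sup_right hac _
    simp [Prod.ext_iff, e1, e2, e3]
  · rintro ⟨p1, p2, p3⟩ ⟨hp1, hp2, hsup⟩
    simp only [Prod.mk_sup_mk, Prod.ext_iff] at hsup
    have h3 : aᶜ ≤ p1 := aux_le_compl hsup.1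
    exact ⟨h3, le_trans h3 hp1, le_trans (le_trans h3 hp1) hp2⟩
  · simp [Prod.ext_iff]
end

section
/- Let 4 denote the four-element chain f < u₂ < u₁ < t viewed as a double Stone algebra with ∼t = ∼u₁ = ∼u₂ = f, ∼f = t, ¬f = ¬u₁ = ¬u₂ = t, ¬t = f. Then the consequence 'for all homomorphic valuations v into 4, v(α) = t implies v(β) = t, and v(β) = f implies v(α) = f' does NOT imply 'v(α) ≤ v(β) for all valuations v'. Concretely: for all x ∈ 4, x ⊓ ¬x ≠ t and x ⊔ ∼x ≠ f, yet u₁ ⊓ ¬u₁ = u₁ ≰ u₂ = u₂ ⊔ ∼u₂. -/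
/-- The Stone pseudocomplement on the four-element chain `Fin 4`
(`f = 0 < u₂ = 1 < u₁ = 2 < t = 3`): `∼f = t`, `∼x = f` for `x ≠ f`. -/
def sneg4 (x : Fin 4) : Fin 4 := if x = 0 then 3 else 0

/-- The dual pseudocomplement on the four-element chain `Fin 4`:
`¬t = f`, `¬x = t` for `x ≠ t`. -/
def dneg4 (x : Fin 4) : Fin 4 := if x = 3 then 0 else 3

/-- In the four-element double Stone algebra `4`, no element `x` satisfies `x ⊓ ¬x = t`, and
no element satisfies `x ⊔ ∼x = f` (so truth and falsity preservation for the consequence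
`α ∧ ¬α ⊢ β ∨ ∼β` hold vacuously); nevertheless `u₁ ⊓ ¬u₁ = u₁ ≰ u₂ = u₂ ⊔ ∼u₂`, so the
order-theoretic consequence fails. Hence Dunn-style truth/falsity preservation does not imply
`v(α) ≤ v(β)` for all valuations. -/
theorem four_valued_counterexample :
    (∀ x : Fin 4, x ⊓ dneg4 x ≠ 3) ∧
    (∀ x : Fin 4, x ⊔ sneg4 x ≠ 0) ∧
    (2 : Fin 4) ⊓ dneg4 2 = 2 ∧
    (1 : Fin 4) ⊔ sneg4 1 = 1 ∧
    ¬ (2 : Fin 4) ≤ 1 := by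
  refine ⟨by decide, by decide, by decide, by decide, by decide⟩
end
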